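/- Let f : ℝⁿ → ℝ and G : ℝⁿ → S^m be twice continuously differentiable. Suppose (x,Λ) ∈ ℝⁿ × S^m is a KKT pair of (P1) which satisfies strict complementarity: rank G(x) + rank Λ = m. Then there exists Y ∈ Φ(Λ) (one may take Y to be the PSD square root of G(x)) such that (x,Y,Λ) is a KKT triple of (P2). -/

import Mathlib

open Matrix

noncomputable section

def jmul {m : ℕ} (A B : Matrix (Fin m) (Fin m) ℝ) : Matrix (Fin m) (Fin m) ℝ :=
  (1 / 2 : ℝ) • (A * B + B * A)

def minner {m : ℕ} (A B : Matrix (Fin m) (Fin m) ℝ) : ℝ :=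
  (A * B).trace

def memPhi {m : ℕ} (Λ Y : Matrix (Fin m) (Fin m) ℝ) : Prop :=
  ∀ W : Matrix (Fin m) (Fin m) ℝ, W.IsSymm → W ≠ 0 → jmul Y W = 0 →
    0 < minner (jmul W W) Λ

def pderivG {n m : ℕ} (G : (Fin n → ℝ) → Matrix (Fin m) (Fin m) ℝ)
    (x : Fin n → ℝ) (k : Fin n) : Matrix (Fin m) (Fin m) ℝ :=
  Matrix.of fun i j => fderiv ℝ (fun y => G y i j) x (Pi.single k 1)

def dirDerivG {n m : ℕ} (G : (Fin n → ℝ) → Matrix (Fin m) (Fin m) ℝ)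
    (x v : Fin n → ℝ) : Matrix (Fin m) (Fin m) ℝ :=
  ∑ k, v k • pderivG G x k

def adjDG {n m : ℕ} (G : (Fin n → ℝ) → Matrix (Fin m) (Fin m) ℝ)
    (x : Fin n → ℝ) (W : Matrix (Fin m) (Fin m) ℝ) : Fin n → ℝ :=
  fun k => minner (pderivG G x k) W

def gradf {n : ℕ} (f : (Fin n → ℝ) → ℝ) (x : Fin n → ℝ) : Fin n → ℝ :=
  fun k => fderiv ℝ f x (Pi.single k 1)

def KKT1 {n m : ℕ} (f : (Fin n → ℝ) → ℝ) (G : (Fin n → ℝ) → Matrix (Fin m) (Fin m) ℝ)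
    (x : Fin n → ℝ) (Λ : Matrix (Fin m) (Fin m) ℝ) : Prop :=
  gradf f x = adjDG G x Λ ∧ Λ.PosSemidef ∧ (G x).PosSemidef ∧ jmul Λ (G x) = 0

def KKT2 {n m : ℕ} (f : (Fin n → ℝ) → ℝ) (G : (Fin n → ℝ) → Matrix (Fin m) (Fin m) ℝ)
    (x : Fin n → ℝ) (Y Λ : Matrix (Fin m) (Fin m) ℝ) : Prop :=
  gradf f x = adjDG G x Λ ∧ jmul Λ Y = 0 ∧ G x = jmul Y Y

def hessQ {n m : ℕ} (f : (Fin n → ℝ) → ℝ) (G : (Fin n → ℝ) → Matrix (Fin m) (Fin m) ℝ)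
    (Λ : Matrix (Fin m) (Fin m) ℝ) (x v : Fin n → ℝ) : ℝ :=
  iteratedFDeriv ℝ 2 (fun y => f y - minner (G y) Λ) x ![v, v]

def SOSCNLP {n m : ℕ} (f : (Fin n → ℝ) → ℝ) (G : (Fin n → ℝ) → Matrix (Fin m) (Fin m) ℝ)
    (x : Fin n → ℝ) (Y Λ : Matrix (Fin m) (Fin m) ℝ) : Prop :=
  ∀ (v : Fin n → ℝ) (W : Matrix (Fin m) (Fin m) ℝ), W.IsSymm →
    ¬(v = 0 ∧ W = 0) → dirDerivG G x v = (2 : ℝ) • jmul Y W →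
    0 < hessQ f G Λ x v + 2 * minner (jmul W W) Λ

def SONCNLP {n m : ℕ} (f : (Fin n → ℝ) → ℝ) (G : (Fin n → ℝ) → Matrix (Fin m) (Fin m) ℝ)
    (x : Fin n → ℝ) (Y Λ : Matrix (Fin m) (Fin m) ℝ) : Prop :=
  ∀ (v : Fin n → ℝ) (W : Matrix (Fin m) (Fin m) ℝ), W.IsSymm →
    dirDerivG G x v = (2 : ℝ) • jmul Y W →
    0 ≤ hessQ f G Λ x v + 2 * minner (jmul W W) Λ

def LICQ {n m : ℕ} (G : (Fin n → ℝ) → Matrix (Fin m) (Fin m) ℝ)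
    (x : Fin n → ℝ) (Y : Matrix (Fin m) (Fin m) ℝ) : Prop :=
  ∀ W : Matrix (Fin m) (Fin m) ℝ, W.IsSymm → jmul Y W = 0 → adjDG G x W = 0 → W = 0

def Nondeg {n m : ℕ} (G : (Fin n → ℝ) → Matrix (Fin m) (Fin m) ℝ)
    (x : Fin n → ℝ) : Prop :=
  ∀ W : Matrix (Fin m) (Fin m) ℝ, W.IsSymm → G x * W = 0 → adjDG G x W = 0 → W = 0

def CritCone {n m : ℕ} (f : (Fin n → ℝ) → ℝ) (G : (Fin n → ℝ) → Matrix (Fin m) (Fin m) ℝ)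
    (x : Fin n → ℝ) : Set (Fin n → ℝ) :=
  {d | (∀ u : Fin m → ℝ, G x *ᵥ u = 0 → 0 ≤ u ⬝ᵥ (dirDerivG G x d *ᵥ u)) ∧
    gradf f x ⬝ᵥ d = 0}

def IsMPInv {m : ℕ} (A P : Matrix (Fin m) (Fin m) ℝ) : Prop :=
  A * P * A = A ∧ P * A * P = P ∧ (A * P)ᵀ = A * P ∧ (P * A)ᵀ = P * A

def Hmat {n m : ℕ} (G : (Fin n → ℝ) → Matrix (Fin m) (Fin m) ℝ)
    (x : Fin n → ℝ) (Λ P : Matrix (Fin m) (Fin m) ℝ) : Matrix (Fin n) (Fin n) ℝ :=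
  Matrix.of fun i j => 2 * (pderivG G x i * P * pderivG G x j * Λ).trace

/-!
Take `Y = √G(x)`. Since `Λ` and `G(x)` are PSD, `Λ ∘ G(x) = 0` already gives `Λ G(x) = 0`, hence
`Λ Y = 0`, and the KKT conditions of (P2) follow. For `Y ∈ Φ(Λ)`: if `W` is symmetric with
`Y ∘ W = 0`, positivity of `Y` forces `Y W = 0`; and `⟨W ∘ W, Λ⟩ = ‖√Λ W‖²` vanishes only when
`Λ W = 0`. Strict complementarity makes `ker Λ ∩ ker Y` trivial, so then `W = 0`.
-/

open scoped MatrixOrder ComplexOrder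

namespace Matrix

variable {ι κ 𝕜 : Type*} [Fintype ι] [RCLike 𝕜]

/-- By rank–nullity, `A * B = 0` and `rank B + rank A = card ι` force `ker A = range B`, and the
range of a hermitian matrix meets its kernel trivially. -/
theorem eq_zero_of_mulVec_eq_zero_of_rank_add_rank_eq {A B : Matrix ι ι 𝕜} (hB : B.IsHermitian)
    (hAB : A * B = 0) (hrank : B.rank + A.rank = Fintype.card ι) {v : ι → 𝕜}
    (hAv : A *ᵥ v = 0) (hBv : B *ᵥ v = 0) : v = 0 := by
  have hker : LinearMap.ker A.mulVecLin = LinearMap.range B.mulVecLin := by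
    refine (Submodule.eq_of_le_of_finrank_eq ?_ ?_).symm
    · rintro _ ⟨u, rfl⟩
      simp [mulVec_mulVec, hAB]
    · have := LinearMap.finrank_range_add_finrank_ker A.mulVecLin
      rw [Module.finrank_fintype_fun_eq_card] at this
      unfold rank at hrank
      omega
  obtain ⟨u, rfl⟩ : v ∈ LinearMap.range B.mulVecLin := hker ▸ hAv
  rw [mulVecLin_apply] at hBv ⊢
  rw [← dotProduct_star_self_eq_zero, star_mulVec, ← dotProduct_mulVec, hB.eq, hBv,
    dotProduct_zero]

theorem eq_zero_of_mul_eq_zero_of_rank_add_rank_eq [Fintype κ] {A B : Matrix ι ι 𝕜}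
    (hB : B.IsHermitian) (hAB : A * B = 0) (hrank : B.rank + A.rank = Fintype.card ι)
    {W : Matrix ι κ 𝕜} (hAW : A * W = 0) (hBW : B * W = 0) : W = 0 :=
  ext_iff_mulVec.mpr fun v => by
    rw [zero_mulVec]
    refine eq_zero_of_mulVec_eq_zero_of_rank_add_rank_eq hB hAB hrank ?_ ?_ <;>
      simp [mulVec_mulVec, hAW, hBW]

variable [DecidableEq ι]

theorem posSemidef_sqrt (A : Matrix ι ι 𝕜) : (CFC.sqrt A).PosSemidef :=
  nonneg_iff_posSemidef.mp (CFC.sqrt_nonneg A)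

theorem PosSemidef.mul_eq_zero_of_trace_conjTranspose_mul_mul_eq_zero [Fintype κ]
    {A : Matrix ι ι 𝕜} {B : Matrix ι κ 𝕜} (hA : A.PosSemidef)
    (h : (Bᴴ * A * B).trace = 0) : A * B = 0 := by
  have hS : (CFC.sqrt A)ᴴ = CFC.sqrt A := (posSemidef_sqrt A).isHermitian.eq
  have hSB : CFC.sqrt A * B = 0 := by
    rwa [← trace_conjTranspose_mul_self_eq_zero_iff, conjTranspose_mul, hS, Matrix.mul_assoc,
      ← Matrix.mul_assoc (CFC.sqrt A), CFC.sqrt_mul_sqrt_self A hA.nonneg, ← Matrix.mul_assoc]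
  rw [← CFC.sqrt_mul_sqrt_self A hA.nonneg, Matrix.mul_assoc, hSB, Matrix.mul_zero]

/-- Since `B * A * B = -(A * B) * B`, the trace of `Bᴴ * A * B` is its own negative. -/
theorem PosSemidef.mul_eq_zero_of_mul_add_mul_eq_zero {A B : Matrix ι ι 𝕜} (hA : A.PosSemidef)
    (hB : B.IsHermitian) (h : A * B + B * A = 0) : A * B = 0 := by
  refine hA.mul_eq_zero_of_trace_conjTranspose_mul_mul_eq_zero ?_
  have hBA : B * A = -(A * B) := eq_neg_of_add_eq_zero_right h
  have htr : (B * A * B).trace = -(B * A * B).trace :=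
    calc (B * A * B).trace = (A * B * B).trace := by rw [Matrix.mul_assoc, trace_mul_comm]
      _ = -(B * A * B).trace := by rw [hBA, Matrix.neg_mul, trace_neg, neg_neg]
  rw [hB.eq]
  linear_combination htr / 2

theorem mul_sqrt_eq_zero_of_mul_eq_zero {A : Matrix κ ι 𝕜} {B : Matrix ι ι 𝕜}
    (hB : B.PosSemidef) (h : A * B = 0) : A * CFC.sqrt B = 0 := by
  have hS : (CFC.sqrt B)ᴴ = CFC.sqrt B := (posSemidef_sqrt B).isHermitian.eq
  rw [← self_mul_conjTranspose_eq_zero, conjTranspose_mul, hS, Matrix.mul_assoc,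
    ← Matrix.mul_assoc (CFC.sqrt B), CFC.sqrt_mul_sqrt_self B hB.nonneg, ← Matrix.mul_assoc, h,
    Matrix.zero_mul]

end Matrix

theorem jmul_eq_zero_iff {m : ℕ} {A B : Matrix (Fin m) (Fin m) ℝ} :
    jmul A B = 0 ↔ A * B + B * A = 0 := by
  rw [jmul, smul_eq_zero, or_iff_right (by norm_num)]

theorem jmul_self {m : ℕ} (A : Matrix (Fin m) (Fin m) ℝ) : jmul A A = A * A := by
  rw [jmul, ← two_smul ℝ (A * A), smul_smul]
  norm_num

theorem memPhi_of_rank_add_rank_eq {m : ℕ} {Λ Y : Matrix (Fin m) (Fin m) ℝ}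
    (hΛ : Λ.PosSemidef) (hY : Y.PosSemidef) (hΛY : Λ * Y = 0) (hrank : Y.rank + Λ.rank = m) :
    memPhi Λ Y := by
  intro W hW hW0 hjmul
  have hWh : W.IsHermitian := by rwa [IsHermitian, conjTranspose_eq_transpose_of_trivial]
  have hYW : Y * W = 0 :=
    hY.mul_eq_zero_of_mul_add_mul_eq_zero hWh (jmul_eq_zero_iff.mp hjmul)
  have htr : minner (jmul W W) Λ = (Wᴴ * Λ * W).trace := by
    rw [minner, jmul_self, hWh.eq, Matrix.mul_assoc, trace_mul_comm, Matrix.mul_assoc]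
  rw [htr]
  refine (hΛ.conjTranspose_mul_mul_same W).trace_nonneg.lt_of_ne fun h => hW0 ?_
  exact eq_zero_of_mul_eq_zero_of_rank_add_rank_eq hY.isHermitian hΛY
    (by rwa [Fintype.card_fin]) (hΛ.mul_eq_zero_of_trace_conjTranspose_mul_mul_eq_zero h.symm) hYW

theorem stmt9_general {n m : ℕ} (f : (Fin n → ℝ) → ℝ) (G : (Fin n → ℝ) → Matrix (Fin m) (Fin m) ℝ)
    (x : Fin n → ℝ) (Λ : Matrix (Fin m) (Fin m) ℝ)
    (hKKT : KKT1 f G x Λ) (hsc : (G x).rank + Λ.rank = m) :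
    ∃ Y : Matrix (Fin m) (Fin m) ℝ, memPhi Λ Y ∧ KKT2 f G x Y Λ := by
  obtain ⟨hgrad, hΛ, hG, hcomp⟩ := hKKT
  set Y := CFC.sqrt (G x)
  have hY : Y.PosSemidef := posSemidef_sqrt _
  have hYY : Y * Y = G x := CFC.sqrt_mul_sqrt_self _ hG.nonneg
  have hΛY : Λ * Y = 0 := mul_sqrt_eq_zero_of_mul_eq_zero hG
    (hΛ.mul_eq_zero_of_mul_add_mul_eq_zero hG.isHermitian (jmul_eq_zero_iff.mp hcomp))
  have hYΛ : Y * Λ = 0 := by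
    rw [← hY.isHermitian.eq, ← hΛ.isHermitian.eq, ← conjTranspose_mul, hΛY,
      conjTranspose_zero]
  have hrank : Y.rank = (G x).rank := by
    rw [← hYY, ← rank_conjTranspose_mul_self Y, hY.isHermitian.eq]
  refine ⟨Y, memPhi_of_rank_add_rank_eq hΛ hY hΛY (hrank ▸ hsc), hgrad, ?_, ?_⟩
  · rw [jmul_eq_zero_iff, hΛY, hYΛ, add_zero]
  · rw [jmul_self, hYY]

theorem stmt9 {n m : ℕ} (f : (Fin n → ℝ) → ℝ) (G : (Fin n → ℝ) → Matrix (Fin m) (Fin m) ℝ)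
    (hf : ContDiff ℝ 2 f) (hG : ∀ i j, ContDiff ℝ 2 fun y => G y i j)
    (x : Fin n → ℝ) (Λ : Matrix (Fin m) (Fin m) ℝ)
    (hKKT : KKT1 f G x Λ) (hsc : (G x).rank + Λ.rank = m) :
    ∃ Y : Matrix (Fin m) (Fin m) ℝ, memPhi Λ Y ∧ KKT2 f G x Y Λ :=
  stmt9_general f G x Λ hKKT hsc
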